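/- arXiv:0902.1873 — 3 statements merged into one kernel-verified Lean document; each statement's English description precedes it below -/
import Mathlib

section
/- Let (u^n)_{n=0,…,M} be the discrete solution of the scheme starting from the discrete initial vector u^0 (with arbitrary boundary data ū^n, ū̄^n∈[0,1]). Then the interior discrete fluxes remain uniformly bounded: for every n∈{1,…,M} and every j∈{−N+1,…,N−1}, |F_j[u^n]| ≤ max_{i=1,2} sup_{(a,b)∈[0,1]²}|G_i(a,b)| + 2L. -/
open Set

noncomputable section

/-- The monotone graph `π̃` associated to an increasing capillary pressure function `π`. -/
def tildePi (π : ℝ → ℝ) (s : ℝ) : Set ℝ :=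
  if s = 0 then Set.Iic (π 0) else if s = 1 then Set.Ici (π 1) else {π s}

/-- The connection condition `π̃₁(c) ∩ π̃₂(d) ≠ ∅`. -/
def Connects (π₁ π₂ : ℝ → ℝ) (c d : ℝ) : Prop :=
  (tildePi π₁ c ∩ tildePi π₂ d).Nonempty

/-- The porosity `ϕ_{i(j)}` of the cell `(x_j, x_{j+1})` (indexed by `j`, representing the
unknown `u_{j+1/2}`): `ϕ₁` if `j < 0` (cell in `Ω₁`), `ϕ₂` if `j ≥ 0` (cell in `Ω₂`). -/
def phiCoef (ϕ₁ ϕ₂ : ℝ) (j : ℤ) : ℝ := if j < 0 then ϕ₁ else ϕ₂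

/-- The numerical flux `F_j[v]` through `x_j`, for a vector `v` (where `v j` stands for
`v_{j+1/2}`), with boundary data `ub = ū`, `uB = ū̄` and interface function `c`. -/
def numFlux (G₁ G₂ : ℝ → ℝ → ℝ) (φ₁ φ₂ : ℝ → ℝ) (c : ℝ → ℝ → ℝ) (δx : ℝ) (N : ℤ)
    (ub uB : ℝ) (v : ℤ → ℝ) (j : ℤ) : ℝ :=
  if j = -N then G₁ ub (v (-N))
  else if j = N then G₂ (v (N - 1)) uB
  else if j < 0 then G₁ (v (j - 1)) (v j) - (φ₁ (v j) - φ₁ (v (j - 1))) / δx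
  else if j = 0 then
    G₁ (v (-1)) (c (v (-1)) (v 0)) - 2 * (φ₁ (c (v (-1)) (v 0)) - φ₁ (v (-1))) / δx
  else G₂ (v (j - 1)) (v j) - (φ₂ (v j) - φ₂ (v (j - 1))) / δx

/-- The left-hand side of the implicit finite volume scheme at time step `n → n+1`,
cell `j`. -/
def schemeLHS (G₁ G₂ : ℝ → ℝ → ℝ) (φ₁ φ₂ : ℝ → ℝ) (c : ℝ → ℝ → ℝ)
    (ϕ₁ ϕ₂ δx δt : ℝ) (N : ℤ) (ubar ubbar : ℕ → ℝ) (u : ℕ → ℤ → ℝ)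
    (n : ℕ) (j : ℤ) : ℝ :=
  phiCoef ϕ₁ ϕ₂ j * (u (n + 1) j - u n j) * δx / δt
    + numFlux G₁ G₂ φ₁ φ₂ c δx N (ubar (n + 1)) (ubbar (n + 1)) (u (n + 1)) (j + 1)
    - numFlux G₁ G₂ φ₁ φ₂ c δx N (ubar (n + 1)) (ubbar (n + 1)) (u (n + 1)) j

/-- `u` takes values in `[0,1]` on the computational cells up to time level `M`. -/
def InRange (N : ℤ) (M : ℕ) (u : ℕ → ℤ → ℝ) : Prop :=
  ∀ n ≤ M, ∀ j ∈ Finset.Icc (-N) (N - 1), u n j ∈ Set.Icc (0 : ℝ) 1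

/-- `u` is a discrete solution of the implicit finite volume scheme. -/
def IsDiscreteSolution (G₁ G₂ : ℝ → ℝ → ℝ) (φ₁ φ₂ : ℝ → ℝ) (c : ℝ → ℝ → ℝ)
    (ϕ₁ ϕ₂ δx δt : ℝ) (N : ℤ) (M : ℕ) (ubar ubbar : ℕ → ℝ) (u : ℕ → ℤ → ℝ) : Prop :=
  InRange N M u ∧ ∀ n < M, ∀ j ∈ Finset.Icc (-N) (N - 1),
    schemeLHS G₁ G₂ φ₁ φ₂ c ϕ₁ ϕ₂ δx δt N ubar ubbar u n j = 0

/-- `u` is a discrete supersolution of the implicit finite volume scheme. -/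
def IsDiscreteSupersolution (G₁ G₂ : ℝ → ℝ → ℝ) (φ₁ φ₂ : ℝ → ℝ) (c : ℝ → ℝ → ℝ)
    (ϕ₁ ϕ₂ δx δt : ℝ) (N : ℤ) (M : ℕ) (ubar ubbar : ℕ → ℝ) (u : ℕ → ℤ → ℝ) : Prop :=
  InRange N M u ∧ ∀ n < M, ∀ j ∈ Finset.Icc (-N) (N - 1),
    0 ≤ schemeLHS G₁ G₂ φ₁ φ₂ c ϕ₁ ϕ₂ δx δt N ubar ubbar u n j

/-- `u` is a discrete subsolution of the implicit finite volume scheme. -/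
def IsDiscreteSubsolution (G₁ G₂ : ℝ → ℝ → ℝ) (φ₁ φ₂ : ℝ → ℝ) (c : ℝ → ℝ → ℝ)
    (ϕ₁ ϕ₂ δx δt : ℝ) (N : ℤ) (M : ℕ) (ubar ubbar : ℕ → ℝ) (u : ℕ → ℤ → ℝ) : Prop :=
  InRange N M u ∧ ∀ n < M, ∀ j ∈ Finset.Icc (-N) (N - 1),
    schemeLHS G₁ G₂ φ₁ φ₂ c ϕ₁ ϕ₂ δx δt N ubar ubbar u n j ≤ 0

/-!
The numerical fluxes are monotone: `F_j` is nondecreasing in `u_{j-1/2}` and nonincreasing in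
`u_{j+1/2}`; at the interface this is because connected pairs `(c, d)` are ordered componentwise.
Hence the fluxes obey a maximum principle in time. Where `j ↦ F_j[u^{n+1}]` has an interior
maximum, the scheme on the two neighbouring cells forces `u^{n+1}_{j-1/2} ≤ u^n_{j-1/2}` and
`u^n_{j+1/2} ≤ u^{n+1}_{j+1/2}`, so `F_j[u^{n+1}] ≤ F_j[u^n]`; minima are symmetric, and the
boundary fluxes are values of `G_i`. It remains to bound the fluxes of `u^0`. A cell average lies
between two values of `u_0` in the cell, so the Lipschitz bound on `φ_i ∘ u_0` gives
`|φ_i(u^0_{j+1/2}) - φ_i(u^0_{j-1/2})| ≤ 2 L δx`. At the interface, `F_0[u^0]` lies between the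
two half-fluxes built on the connected traces `(u_0(0⁻), u_0(0⁺))`, each within `sup |G_i| + 2L`.
-/

lemma lt_of_mem_tildePi {π : ℝ → ℝ} (hπ : StrictMonoOn π (Icc 0 1))
    {c c' p p' : ℝ} (hc : c ∈ Icc (0:ℝ) 1) (hc' : c' ∈ Icc (0:ℝ) 1)
    (hp : p ∈ tildePi π c) (hp' : p' ∈ tildePi π c') (hcc' : c < c') : p < p' := by
  have hle : p ≤ π c := by
    simp only [tildePi, if_neg (hcc'.trans_le hc'.2).ne] at hp
    split_ifs at hp with h0
    exacts [h0 ▸ hp, hp.le]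
  have hge : π c' ≤ p' := by
    simp only [tildePi, if_neg (hc.1.trans_lt hcc').ne'] at hp'
    split_ifs at hp' with h1
    exacts [h1 ▸ hp', hp'.ge]
  exact hle.trans_lt ((hπ hc hc' hcc').trans_le hge)

lemma Connects.le_of_lt {π₁ π₂ : ℝ → ℝ} (hπ₁ : StrictMonoOn π₁ (Icc 0 1))
    (hπ₂ : StrictMonoOn π₂ (Icc 0 1)) {c d c' d' : ℝ}
    (hc : c ∈ Icc (0:ℝ) 1) (hd : d ∈ Icc (0:ℝ) 1) (hc' : c' ∈ Icc (0:ℝ) 1)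
    (hd' : d' ∈ Icc (0:ℝ) 1) (h : Connects π₁ π₂ c d) (h' : Connects π₁ π₂ c' d')
    (hcc' : c < c') : d ≤ d' := by
  obtain ⟨p, hp₁, hp₂⟩ := h
  obtain ⟨p', hp₁', hp₂'⟩ := h'
  exact not_lt.1 fun hd'd => (lt_of_mem_tildePi hπ₁ hc hc' hp₁ hp₁' hcc').asymm
    (lt_of_mem_tildePi hπ₂ hd' hd hp₂' hp₂ hd'd)

lemma Connects.comparable {π₁ π₂ : ℝ → ℝ} (hπ₁ : StrictMonoOn π₁ (Icc 0 1))
    (hπ₂ : StrictMonoOn π₂ (Icc 0 1)) {c d c' d' : ℝ}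
    (hc : c ∈ Icc (0:ℝ) 1) (hd : d ∈ Icc (0:ℝ) 1) (hc' : c' ∈ Icc (0:ℝ) 1)
    (hd' : d' ∈ Icc (0:ℝ) 1) (h : Connects π₁ π₂ c d) (h' : Connects π₁ π₂ c' d') :
    (c ≤ c' ∧ d ≤ d') ∨ (c' ≤ c ∧ d' ≤ d) := by
  rcases lt_trichotomy c c' with hcc' | rfl | hc'c
  · exact Or.inl ⟨hcc'.le, h.le_of_lt hπ₁ hπ₂ hc hd hc' hd' h' hcc'⟩
  · exact (le_total d d').imp (⟨le_rfl, ·⟩) (⟨le_rfl, ·⟩)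
  · exact Or.inr ⟨hc'c.le, h'.le_of_lt hπ₁ hπ₂ hc' hd' hc hd h hc'c⟩

structure MonotoneSchemeData (π₁ π₂ φ₁ φ₂ : ℝ → ℝ) (G₁ G₂ : ℝ → ℝ → ℝ) : Prop where
  π₁_strictMonoOn : StrictMonoOn π₁ (Icc 0 1)
  π₂_strictMonoOn : StrictMonoOn π₂ (Icc 0 1)
  φ₁_monotoneOn : MonotoneOn φ₁ (Icc 0 1)
  φ₂_monotoneOn : MonotoneOn φ₂ (Icc 0 1)
  G₁_mono : ∀ b ∈ Icc (0:ℝ) 1, MonotoneOn (fun a => G₁ a b) (Icc 0 1)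
  G₁_anti : ∀ a ∈ Icc (0:ℝ) 1, AntitoneOn (fun b => G₁ a b) (Icc 0 1)
  G₂_mono : ∀ b ∈ Icc (0:ℝ) 1, MonotoneOn (fun a => G₂ a b) (Icc 0 1)
  G₂_anti : ∀ a ∈ Icc (0:ℝ) 1, AntitoneOn (fun b => G₂ a b) (Icc 0 1)

lemma convDiffFlux_mono {G : ℝ → ℝ → ℝ} {φ : ℝ → ℝ}
    (hG_mono : ∀ b ∈ Icc (0:ℝ) 1, MonotoneOn (fun a => G a b) (Icc 0 1))
    (hG_anti : ∀ a ∈ Icc (0:ℝ) 1, AntitoneOn (fun b => G a b) (Icc 0 1))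
    (hφ : MonotoneOn φ (Icc 0 1)) {κ δx : ℝ} (hκ : 0 ≤ κ) (hδx : 0 ≤ δx)
    {a b a' b' : ℝ} (ha : a ∈ Icc (0:ℝ) 1) (hb : b ∈ Icc (0:ℝ) 1)
    (ha' : a' ∈ Icc (0:ℝ) 1) (hb' : b' ∈ Icc (0:ℝ) 1) (haa' : a ≤ a') (hb'b : b' ≤ b) :
    G a b - κ * (φ b - φ a) / δx ≤ G a' b' - κ * (φ b' - φ a') / δx := by
  have hG : G a b ≤ G a' b' :=
    (hG_anti a ha hb' hb hb'b).trans (hG_mono b' hb' ha ha' haa')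
  have hφ' : κ * (φ b' - φ a') / δx ≤ κ * (φ b - φ a) / δx := by
    gcongr
    · exact hφ hb' hb hb'b
    · exact hφ ha ha' haa'
  linarith

lemma abs_le_sSup_abs {G : ℝ → ℝ → ℝ}
    (hG : ContinuousOn (fun p : ℝ × ℝ => G p.1 p.2) (Icc 0 1 ×ˢ Icc 0 1))
    {a b : ℝ} (ha : a ∈ Icc (0:ℝ) 1) (hb : b ∈ Icc (0:ℝ) 1) :
    |G a b| ≤ sSup {r : ℝ | ∃ a ∈ Icc (0:ℝ) 1, ∃ b ∈ Icc (0:ℝ) 1, r = |G a b|} := by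
  obtain ⟨C, hC⟩ := (isCompact_Icc.prod isCompact_Icc).bddAbove_image hG.abs
  refine le_csSup ⟨C, ?_⟩ ⟨a, ha, b, hb, rfl⟩
  rintro r ⟨a, ha, b, hb, rfl⟩
  exact hC ⟨(a, b), ⟨ha, hb⟩, rfl⟩

lemma abs_sub_div_le_add {g e δ B K : ℝ} (hδ : 0 < δ) (hg : |g| ≤ B) (he : |e| ≤ K * δ) :
    |g - e / δ| ≤ B + K :=
  calc |g - e / δ| ≤ |g| + |e / δ| := abs_sub _ _
    _ ≤ B + K := by
      gcongr
      rwa [abs_div, abs_of_pos hδ, div_le_iff₀ hδ]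

section Interface

variable {π₁ π₂ φ₁ φ₂ : ℝ → ℝ} {G₁ G₂ : ℝ → ℝ → ℝ} {δx : ℝ}

def leftIfaceFlux (G₁ : ℝ → ℝ → ℝ) (φ₁ : ℝ → ℝ) (δx a c : ℝ) : ℝ :=
  G₁ a c - 2 * (φ₁ c - φ₁ a) / δx

def rightIfaceFlux (G₂ : ℝ → ℝ → ℝ) (φ₂ : ℝ → ℝ) (δx d b : ℝ) : ℝ :=
  G₂ d b - 2 * (φ₂ b - φ₂ d) / δx

/-- `(C, D)` are the interface traces `(c(a,b), d(a,b))` of the scheme. -/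
def IsInterfaceState (π₁ π₂ φ₁ φ₂ : ℝ → ℝ) (G₁ G₂ : ℝ → ℝ → ℝ) (δx a b C D : ℝ) : Prop :=
  C ∈ Icc (0:ℝ) 1 ∧ D ∈ Icc (0:ℝ) 1 ∧
    leftIfaceFlux G₁ φ₁ δx a C = rightIfaceFlux G₂ φ₂ δx D b ∧ Connects π₁ π₂ C D

def IsInterfaceMap (π₁ π₂ φ₁ φ₂ : ℝ → ℝ) (G₁ G₂ : ℝ → ℝ → ℝ) (δx : ℝ) (c d : ℝ → ℝ → ℝ) :
    Prop :=
  ∀ a ∈ Icc (0:ℝ) 1, ∀ b ∈ Icc (0:ℝ) 1, IsInterfaceState π₁ π₂ φ₁ φ₂ G₁ G₂ δx a b (c a b) (d a b)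

lemma IsInterfaceState.mem_uIcc (h : MonotoneSchemeData π₁ π₂ φ₁ φ₂ G₁ G₂) (hδx : 0 ≤ δx)
    {a b C D c' d' : ℝ} (ha : a ∈ Icc (0:ℝ) 1) (hb : b ∈ Icc (0:ℝ) 1)
    (hCD : IsInterfaceState π₁ π₂ φ₁ φ₂ G₁ G₂ δx a b C D)
    (hc' : c' ∈ Icc (0:ℝ) 1) (hd' : d' ∈ Icc (0:ℝ) 1) (hcd' : Connects π₁ π₂ c' d') :
    leftIfaceFlux G₁ φ₁ δx a C ∈
      uIcc (leftIfaceFlux G₁ φ₁ δx a c') (rightIfaceFlux G₂ φ₂ δx d' b) := by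
  obtain ⟨hC, hD, hflux, hconn⟩ := hCD
  have left {x y : ℝ} (hx : x ∈ Icc (0:ℝ) 1) (hy : y ∈ Icc (0:ℝ) 1) (hxy : x ≤ y) :
      leftIfaceFlux G₁ φ₁ δx a y ≤ leftIfaceFlux G₁ φ₁ δx a x :=
    convDiffFlux_mono h.G₁_mono h.G₁_anti h.φ₁_monotoneOn zero_le_two hδx ha hy ha hx le_rfl hxy
  have right {x y : ℝ} (hx : x ∈ Icc (0:ℝ) 1) (hy : y ∈ Icc (0:ℝ) 1) (hxy : x ≤ y) :
      rightIfaceFlux G₂ φ₂ δx x b ≤ rightIfaceFlux G₂ φ₂ δx y b :=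
    convDiffFlux_mono h.G₂_mono h.G₂_anti h.φ₂_monotoneOn zero_le_two hδx hx hb hy hb hxy le_rfl
  rw [Set.mem_uIcc]
  rcases hconn.comparable h.π₁_strictMonoOn h.π₂_strictMonoOn hC hD hc' hd' hcd' with
    ⟨hCc', hDd'⟩ | ⟨hc'C, hd'D⟩
  · exact Or.inl ⟨left hC hc' hCc', hflux ▸ right hD hd' hDd'⟩
  · exact Or.inr ⟨hflux ▸ right hd' hD hd'D, left hc' hC hc'C⟩

lemma IsInterfaceState.leftIfaceFlux_le (h : MonotoneSchemeData π₁ π₂ φ₁ φ₂ G₁ G₂)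
    (hδx : 0 ≤ δx) {a b a' b' C D C' D' : ℝ} (ha : a ∈ Icc (0:ℝ) 1) (hb : b ∈ Icc (0:ℝ) 1)
    (ha' : a' ∈ Icc (0:ℝ) 1) (hb' : b' ∈ Icc (0:ℝ) 1)
    (hCD : IsInterfaceState π₁ π₂ φ₁ φ₂ G₁ G₂ δx a b C D)
    (hCD' : IsInterfaceState π₁ π₂ φ₁ φ₂ G₁ G₂ δx a' b' C' D') (haa' : a ≤ a') (hb'b : b' ≤ b) :
    leftIfaceFlux G₁ φ₁ δx a C ≤ leftIfaceFlux G₁ φ₁ δx a' C' := by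
  obtain ⟨hC, hD, hflux, hconn⟩ := hCD
  obtain ⟨hC', hD', hflux', hconn'⟩ := hCD'
  rcases hconn.comparable h.π₁_strictMonoOn h.π₂_strictMonoOn hC hD hC' hD' hconn' with
    ⟨-, hDD'⟩ | ⟨hC'C, -⟩
  · rw [hflux, hflux']
    exact convDiffFlux_mono h.G₂_mono h.G₂_anti h.φ₂_monotoneOn zero_le_two hδx
      hD hb hD' hb' hDD' hb'b
  · exact convDiffFlux_mono h.G₁_mono h.G₁_anti h.φ₁_monotoneOn zero_le_two hδx
      ha hC ha' hC' haa' hC'C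

lemma abs_leftIfaceFlux_le (h : MonotoneSchemeData π₁ π₂ φ₁ φ₂ G₁ G₂) (hδx : 0 < δx)
    {c d : ℝ → ℝ → ℝ} (hcd : IsInterfaceMap π₁ π₂ φ₁ φ₂ G₁ G₂ δx c d) {B L a b c' d' : ℝ}
    (hG₁ : ∀ a ∈ Icc (0:ℝ) 1, ∀ b ∈ Icc (0:ℝ) 1, |G₁ a b| ≤ B)
    (hG₂ : ∀ a ∈ Icc (0:ℝ) 1, ∀ b ∈ Icc (0:ℝ) 1, |G₂ a b| ≤ B)
    (ha : a ∈ Icc (0:ℝ) 1) (hb : b ∈ Icc (0:ℝ) 1) (hc' : c' ∈ Icc (0:ℝ) 1)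
    (hd' : d' ∈ Icc (0:ℝ) 1) (hcd' : Connects π₁ π₂ c' d')
    (hac' : |φ₁ a - φ₁ c'| ≤ L * δx) (hbd' : |φ₂ b - φ₂ d'| ≤ L * δx) :
    |leftIfaceFlux G₁ φ₁ δx a (c a b)| ≤ B + 2 * L := by
  have hleft : |leftIfaceFlux G₁ φ₁ δx a c'| ≤ B + 2 * L := by
    refine abs_sub_div_le_add hδx (hG₁ _ ha _ hc') ?_
    rw [abs_mul, abs_two, abs_sub_comm]
    linarith
  have hright : |rightIfaceFlux G₂ φ₂ δx d' b| ≤ B + 2 * L := by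
    refine abs_sub_div_le_add hδx (hG₂ _ hd' _ hb) ?_
    rw [abs_mul, abs_two]
    linarith
  exact abs_le.2 (uIcc_subset_Icc (abs_le.1 hleft) (abs_le.1 hright)
    ((hcd a ha b hb).mem_uIcc h hδx.le ha hb hc' hd' hcd'))

end Interface

section NumFlux

variable {π₁ π₂ φ₁ φ₂ : ℝ → ℝ} {G₁ G₂ : ℝ → ℝ → ℝ} {c d : ℝ → ℝ → ℝ} {δx : ℝ} {N j : ℤ}
  {ub uB ub' uB' : ℝ} {v w : ℤ → ℝ}

lemma numFlux_neg_self : numFlux G₁ G₂ φ₁ φ₂ c δx N ub uB v (-N) = G₁ ub (v (-N)) := by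
  simp [numFlux]

lemma numFlux_self (hN : 0 < N) : numFlux G₁ G₂ φ₁ φ₂ c δx N ub uB v N = G₂ (v (N - 1)) uB := by
  simp [numFlux, show N ≠ -N by omega]

lemma numFlux_of_neg (hj : -N < j) (hj0 : j < 0) :
    numFlux G₁ G₂ φ₁ φ₂ c δx N ub uB v j
      = G₁ (v (j - 1)) (v j) - (φ₁ (v j) - φ₁ (v (j - 1))) / δx := by
  simp [numFlux, hj.ne', hj0, show j ≠ N by omega]

lemma numFlux_zero (hN : 0 < N) :
    numFlux G₁ G₂ φ₁ φ₂ c δx N ub uB v 0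
      = leftIfaceFlux G₁ φ₁ δx (v (-1)) (c (v (-1)) (v 0)) := by
  simp [numFlux, leftIfaceFlux, hN.ne, hN.ne']

lemma numFlux_of_pos (hj0 : 0 < j) (hj : j < N) :
    numFlux G₁ G₂ φ₁ φ₂ c δx N ub uB v j
      = G₂ (v (j - 1)) (v j) - (φ₂ (v j) - φ₂ (v (j - 1))) / δx := by
  simp [numFlux, hj.ne, hj0.not_gt, hj0.ne', show j ≠ -N by omega]

lemma numFlux_congr (hj : -N < j) (hjN : j < N) (h₁ : v (j - 1) = w (j - 1)) (h₂ : v j = w j) :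
    numFlux G₁ G₂ φ₁ φ₂ c δx N ub uB v j = numFlux G₁ G₂ φ₁ φ₂ c δx N ub' uB' w j := by
  rcases lt_trichotomy j 0 with hj0 | rfl | hj0
  · rw [numFlux_of_neg hj hj0, numFlux_of_neg hj hj0, h₁, h₂]
  · rw [zero_sub] at h₁
    rw [numFlux_zero hjN, numFlux_zero hjN, h₁, h₂]
  · rw [numFlux_of_pos hj0 hjN, numFlux_of_pos hj0 hjN, h₁, h₂]

lemma numFlux_mono (h : MonotoneSchemeData π₁ π₂ φ₁ φ₂ G₁ G₂) (hδx : 0 ≤ δx)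
    (hcd : IsInterfaceMap π₁ π₂ φ₁ φ₂ G₁ G₂ δx c d)
    (hj : -N < j) (hjN : j < N) (hv₁ : v (j - 1) ∈ Icc (0:ℝ) 1) (hv₂ : v j ∈ Icc (0:ℝ) 1)
    (hw₁ : w (j - 1) ∈ Icc (0:ℝ) 1) (hw₂ : w j ∈ Icc (0:ℝ) 1)
    (h₁ : v (j - 1) ≤ w (j - 1)) (h₂ : w j ≤ v j) :
    numFlux G₁ G₂ φ₁ φ₂ c δx N ub uB v j ≤ numFlux G₁ G₂ φ₁ φ₂ c δx N ub' uB' w j := by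
  rcases lt_trichotomy j 0 with hj0 | rfl | hj0
  · rw [numFlux_of_neg hj hj0, numFlux_of_neg hj hj0]
    simpa only [one_mul] using convDiffFlux_mono (κ := 1) h.G₁_mono h.G₁_anti h.φ₁_monotoneOn
      zero_le_one hδx hv₁ hv₂ hw₁ hw₂ h₁ h₂
  · rw [zero_sub] at hv₁ hw₁ h₁
    rw [numFlux_zero hjN, numFlux_zero hjN]
    exact (hcd _ hv₁ _ hv₂).leftIfaceFlux_le h hδx hv₁ hv₂ hw₁ hw₂ (hcd _ hw₁ _ hw₂) h₁ h₂
  · rw [numFlux_of_pos hj0 hjN, numFlux_of_pos hj0 hjN]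
    simpa only [one_mul] using convDiffFlux_mono (κ := 1) h.G₂_mono h.G₂_anti h.φ₂_monotoneOn
      zero_le_one hδx hv₁ hv₂ hw₁ hw₂ h₁ h₂

end NumFlux

lemma discrete_maximum_principle {f : ℤ → ℝ} {a b : ℤ} {B : ℝ} (hab : a ≤ b) (ha : f a ≤ B)
    (hb : f b ≤ B) (hloc : ∀ j, a < j → j < b → f (j - 1) ≤ f j → f (j + 1) ≤ f j → f j ≤ B) :
    ∀ j ∈ Finset.Icc a b, f j ≤ B := by
  obtain ⟨j₀, hj₀, hmax⟩ := (Finset.Icc a b).exists_max_image f ⟨a, by simp [hab]⟩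
  rw [Finset.mem_Icc] at hj₀
  intro j hj
  refine (hmax j hj).trans ?_
  rcases eq_or_lt_of_le hj₀.1 with rfl | haj₀
  · exact ha
  rcases eq_or_lt_of_le hj₀.2 with rfl | hj₀b
  · exact hb
  exact hloc j₀ haj₀ hj₀b (hmax _ (by simp; omega)) (hmax _ (by simp; omega))

section Scheme

variable {π₁ π₂ φ₁ φ₂ : ℝ → ℝ} {G₁ G₂ : ℝ → ℝ → ℝ} {c d : ℝ → ℝ → ℝ}
  {ϕ₁ ϕ₂ δx δt : ℝ} {N : ℤ} {M n : ℕ} {ubar ubbar : ℕ → ℝ} {u : ℕ → ℤ → ℝ} {j : ℤ}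

local notation "F" => numFlux G₁ G₂ φ₁ φ₂ c δx N (ubar (n + 1)) (ubbar (n + 1))

lemma phiCoef_mul_div_pos (hϕ₁ : 0 < ϕ₁) (hϕ₂ : 0 < ϕ₂) (hδx : 0 < δx) (hδt : 0 < δt)
    (j : ℤ) : 0 < phiCoef ϕ₁ ϕ₂ j * δx / δt := by
  have : 0 < phiCoef ϕ₁ ϕ₂ j := by
    unfold phiCoef
    split_ifs <;> assumption
  positivity

lemma mul_sub_eq_of_schemeLHS_eq_zero
    (h : schemeLHS G₁ G₂ φ₁ φ₂ c ϕ₁ ϕ₂ δx δt N ubar ubbar u n j = 0) :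
    (phiCoef ϕ₁ ϕ₂ j * δx / δt) * (u (n + 1) j - u n j)
      = F (u (n + 1)) j - F (u (n + 1)) (j + 1) := by
  unfold schemeLHS at h
  linear_combination h

lemma le_succ_iff_of_schemeLHS_eq_zero (hk : 0 < phiCoef ϕ₁ ϕ₂ j * δx / δt)
    (h : schemeLHS G₁ G₂ φ₁ φ₂ c ϕ₁ ϕ₂ δx δt N ubar ubbar u n j = 0) :
    u n j ≤ u (n + 1) j ↔ F (u (n + 1)) (j + 1) ≤ F (u (n + 1)) j := by
  have key := mul_sub_eq_of_schemeLHS_eq_zero h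
  constructor <;> intro hle <;> nlinarith

lemma succ_le_iff_of_schemeLHS_eq_zero (hk : 0 < phiCoef ϕ₁ ϕ₂ j * δx / δt)
    (h : schemeLHS G₁ G₂ φ₁ φ₂ c ϕ₁ ϕ₂ δx δt N ubar ubbar u n j = 0) :
    u (n + 1) j ≤ u n j ↔ F (u (n + 1)) j ≤ F (u (n + 1)) (j + 1) := by
  have key := mul_sub_eq_of_schemeLHS_eq_zero h
  constructor <;> intro hle <;> nlinarith

lemma InRange.mem (hu : InRange N M u) (hn : n ≤ M) (hj : -N ≤ j) (hjN : j ≤ N - 1) :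
    u n j ∈ Icc (0:ℝ) 1 :=
  hu n hn j (Finset.mem_Icc.2 ⟨hj, hjN⟩)

lemma numFlux_succ_le_of_localMax (h : MonotoneSchemeData π₁ π₂ φ₁ φ₂ G₁ G₂)
    (hcd : IsInterfaceMap π₁ π₂ φ₁ φ₂ G₁ G₂ δx c d) (hϕ₁ : 0 < ϕ₁) (hϕ₂ : 0 < ϕ₂)
    (hδx : 0 < δx) (hδt : 0 < δt)
    (hu : IsDiscreteSolution G₁ G₂ φ₁ φ₂ c ϕ₁ ϕ₂ δx δt N M ubar ubbar u) (hn : n < M)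
    (hj : -N < j) (hjN : j < N)
    (hl : F (u (n + 1)) (j - 1) ≤ F (u (n + 1)) j) (hr : F (u (n + 1)) (j + 1) ≤ F (u (n + 1)) j) :
    F (u (n + 1)) j ≤ F (u n) j := by
  obtain ⟨hrange, hsol⟩ := hu
  have hk := phiCoef_mul_div_pos hϕ₁ hϕ₂ hδx hδt
  have h₁ : u (n + 1) (j - 1) ≤ u n (j - 1) := by
    refine (succ_le_iff_of_schemeLHS_eq_zero (hk _) (hsol n hn _ ?_)).2 (by rwa [sub_add_cancel])
    exact Finset.mem_Icc.2 ⟨by omega, by omega⟩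
  have h₂ : u n j ≤ u (n + 1) j :=
    (le_succ_iff_of_schemeLHS_eq_zero (hk _)
      (hsol n hn _ (Finset.mem_Icc.2 ⟨by omega, by omega⟩))).2 hr
  exact numFlux_mono h hδx.le hcd hj hjN (hrange.mem hn (by omega) (by omega))
    (hrange.mem hn (by omega) (by omega)) (hrange.mem hn.le (by omega) (by omega))
    (hrange.mem hn.le (by omega) (by omega)) h₁ h₂

lemma le_numFlux_succ_of_localMin (h : MonotoneSchemeData π₁ π₂ φ₁ φ₂ G₁ G₂)
    (hcd : IsInterfaceMap π₁ π₂ φ₁ φ₂ G₁ G₂ δx c d) (hϕ₁ : 0 < ϕ₁) (hϕ₂ : 0 < ϕ₂)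
    (hδx : 0 < δx) (hδt : 0 < δt)
    (hu : IsDiscreteSolution G₁ G₂ φ₁ φ₂ c ϕ₁ ϕ₂ δx δt N M ubar ubbar u) (hn : n < M)
    (hj : -N < j) (hjN : j < N)
    (hl : F (u (n + 1)) j ≤ F (u (n + 1)) (j - 1)) (hr : F (u (n + 1)) j ≤ F (u (n + 1)) (j + 1)) :
    F (u n) j ≤ F (u (n + 1)) j := by
  obtain ⟨hrange, hsol⟩ := hu
  have hk := phiCoef_mul_div_pos hϕ₁ hϕ₂ hδx hδt
  have h₁ : u n (j - 1) ≤ u (n + 1) (j - 1) := by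
    refine (le_succ_iff_of_schemeLHS_eq_zero (hk _) (hsol n hn _ ?_)).2 (by rwa [sub_add_cancel])
    exact Finset.mem_Icc.2 ⟨by omega, by omega⟩
  have h₂ : u (n + 1) j ≤ u n j :=
    (succ_le_iff_of_schemeLHS_eq_zero (hk _)
      (hsol n hn _ (Finset.mem_Icc.2 ⟨by omega, by omega⟩))).2 hr
  exact numFlux_mono h hδx.le hcd hj hjN (hrange.mem hn.le (by omega) (by omega))
    (hrange.mem hn.le (by omega) (by omega)) (hrange.mem hn (by omega) (by omega))
    (hrange.mem hn (by omega) (by omega)) h₁ h₂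

lemma abs_numFlux_succ_le (h : MonotoneSchemeData π₁ π₂ φ₁ φ₂ G₁ G₂)
    (hcd : IsInterfaceMap π₁ π₂ φ₁ φ₂ G₁ G₂ δx c d) (hϕ₁ : 0 < ϕ₁) (hϕ₂ : 0 < ϕ₂)
    (hδx : 0 < δx) (hδt : 0 < δt)
    (hu : IsDiscreteSolution G₁ G₂ φ₁ φ₂ c ϕ₁ ϕ₂ δx δt N M ubar ubbar u) (hn : n < M)
    (hN : 0 < N) (hub : ubar (n + 1) ∈ Icc (0:ℝ) 1) (huB : ubbar (n + 1) ∈ Icc (0:ℝ) 1)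
    {ub uB B : ℝ}
    (hG₁ : ∀ a ∈ Icc (0:ℝ) 1, ∀ b ∈ Icc (0:ℝ) 1, |G₁ a b| ≤ B)
    (hG₂ : ∀ a ∈ Icc (0:ℝ) 1, ∀ b ∈ Icc (0:ℝ) 1, |G₂ a b| ≤ B)
    (hprev : ∀ j, -N < j → j < N → |numFlux G₁ G₂ φ₁ φ₂ c δx N ub uB (u n) j| ≤ B) :
    ∀ j ∈ Finset.Icc (-N) N, |F (u (n + 1)) j| ≤ B := by
  have hprev' (j : ℤ) (hj : -N < j) (hjN : j < N) : |F (u n) j| ≤ B := by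
    rw [numFlux_congr hj hjN rfl rfl]
    exact hprev j hj hjN
  have hleft : |F (u (n + 1)) (-N)| ≤ B := by
    rw [numFlux_neg_self]
    exact hG₁ _ hub _ (hu.1.mem hn le_rfl (by omega))
  have hright : |F (u (n + 1)) N| ≤ B := by
    rw [numFlux_self hN]
    exact hG₂ _ (hu.1.mem hn (by omega) le_rfl) _ huB
  have upper := discrete_maximum_principle (f := F (u (n + 1))) (by omega)
    (abs_le.1 hleft).2 (abs_le.1 hright).2 fun j hj hjN hl hr =>
      (numFlux_succ_le_of_localMax h hcd hϕ₁ hϕ₂ hδx hδt hu hn hj hjN hl hr).trans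
        (abs_le.1 (hprev' j hj hjN)).2
  have lower := discrete_maximum_principle (f := fun j => -F (u (n + 1)) j) (by omega)
    (neg_le.2 (abs_le.1 hleft).1) (neg_le.2 (abs_le.1 hright).1) fun j hj hjN hl hr =>
      neg_le.2 ((abs_le.1 (hprev' j hj hjN)).1.trans (le_numFlux_succ_of_localMin h hcd hϕ₁ hϕ₂
        hδx hδt hu hn hj hjN (neg_le_neg_iff.1 hl) (neg_le_neg_iff.1 hr)))
  exact fun j hj => abs_le.2 ⟨neg_le.1 (lower j hj), upper j hj⟩

end Scheme

section CellAverage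

open MeasureTheory Filter Topology

/-- The cell `(x_j, x_{j+1})` of the uniform grid of step `1/N`. -/
def cell (N : ℕ) (j : ℤ) : Set ℝ := Ioo ((j : ℝ) / N) (((j : ℝ) + 1) / N)

def cellAverage (f : ℝ → ℝ) (N : ℕ) (j : ℤ) : ℝ :=
  (N : ℝ) * ∫ x in ((j : ℝ) / (N : ℝ))..(((j : ℝ) + 1) / (N : ℝ)), f x

variable {f φ : ℝ → ℝ} {N : ℕ} {j : ℤ}

lemma cellAverage_eq_setAverage (hN : 0 < N) : cellAverage f N j = ⨍ x in cell N j, f x := by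
  have hN' : (0 : ℝ) < N := Nat.cast_pos.2 hN
  have hlt : (j : ℝ) / N < ((j : ℝ) + 1) / N := by gcongr; linarith
  rw [cellAverage, cell, setAverage_eq, Real.volume_real_Ioo_of_le hlt.le,
    intervalIntegral.integral_of_le hlt.le, integral_Ioc_eq_integral_Ioo, smul_eq_mul]
  congr 1
  field_simp
  ring

lemma exists_le_cellAverage_le (hN : 0 < N) (hf : Measurable f)
    (hrange : ∀ x ∈ cell N j, f x ∈ Icc (0:ℝ) 1) :
    ∃ x ∈ cell N j, ∃ y ∈ cell N j, f x ≤ cellAverage f N j ∧ cellAverage f N j ≤ f y := by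
  have hvol : volume (cell N j) ≠ 0 :=
    isOpen_Ioo.measure_ne_zero volume (nonempty_Ioo.2 (by gcongr; linarith))
  have hint : IntegrableOn f (cell N j) :=
    Measure.integrableOn_of_bounded (M := 1) measure_Ioo_lt_top.ne hf.aestronglyMeasurable
      ((ae_restrict_iff' measurableSet_Ioo).2 (Eventually.of_forall fun x hx => by
        rw [Real.norm_eq_abs, abs_le]
        exact ⟨by linarith [(hrange x hx).1], (hrange x hx).2⟩))
  obtain ⟨x, hx, hfx⟩ := exists_le_setAverage hvol measure_Ioo_lt_top.ne hint
  obtain ⟨y, hy, hfy⟩ := exists_setAverage_le hvol measure_Ioo_lt_top.ne hint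
  rw [← cellAverage_eq_setAverage hN] at hfx hfy
  exact ⟨x, hx, y, hy, hfx, hfy⟩

lemma cellAverage_mem_Icc (hN : 0 < N) (hf : Measurable f)
    (hrange : ∀ x ∈ cell N j, f x ∈ Icc (0:ℝ) 1) : cellAverage f N j ∈ Icc (0:ℝ) 1 := by
  obtain ⟨x, hx, y, hy, hfx, hfy⟩ := exists_le_cellAverage_le hN hf hrange
  exact ⟨(hrange x hx).1.trans hfx, hfy.trans (hrange y hy).2⟩

lemma abs_sub_le_of_mem_cell {x z : ℝ} (hx : x ∈ cell N j)
    (hz : z ∈ Icc ((j : ℝ) / N) (((j : ℝ) + 1) / N)) : |x - z| ≤ 1 / N := by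
  have e : ((j : ℝ) + 1) / N - j / N = 1 / N := by ring
  rw [abs_le]
  constructor <;> linarith [hx.1, hx.2, hz.1, hz.2]

lemma abs_sub_le_of_mem_adjacent_cells {x y : ℝ} (hx : x ∈ cell N (j - 1)) (hy : y ∈ cell N j) :
    |y - x| ≤ 2 / N := by
  simp only [cell, mem_Ioo, Int.cast_sub, Int.cast_one, sub_add_cancel] at hx hy
  have e : ((j : ℝ) + 1) / N - ((j : ℝ) - 1) / N = 2 / N := by ring
  rw [abs_le]
  constructor <;> linarith [hx.1, hx.2, hy.1, hy.2]

lemma abs_cellAverage_sub_le {S : Set ℝ} {L : ℝ} (hN : 0 < N) (hf : Measurable f)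
    (hφ : MonotoneOn φ (Icc 0 1)) (hL : 0 ≤ L) (hrange : ∀ x ∈ S, f x ∈ Icc (0:ℝ) 1)
    (hLip : ∀ x ∈ S, ∀ y ∈ S, |φ (f x) - φ (f y)| ≤ L * |x - y|)
    (h₁ : cell N (j - 1) ⊆ S) (h₂ : cell N j ⊆ S) :
    |φ (cellAverage f N j) - φ (cellAverage f N (j - 1))| ≤ 2 * L / N := by
  have hrange₁ x (hx : x ∈ cell N (j - 1)) := hrange x (h₁ hx)
  have hrange₂ x (hx : x ∈ cell N j) := hrange x (h₂ hx)
  obtain ⟨x₁, hx₁, y₁, hy₁, hfx₁, hfy₁⟩ := exists_le_cellAverage_le hN hf hrange₁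
  obtain ⟨x₂, hx₂, y₂, hy₂, hfx₂, hfy₂⟩ := exists_le_cellAverage_le hN hf hrange₂
  have hm₁ := cellAverage_mem_Icc hN hf hrange₁
  have hm₂ := cellAverage_mem_Icc hN hf hrange₂
  have hdist {x y : ℝ} (hx : x ∈ cell N (j - 1)) (hy : y ∈ cell N j) :
      |φ (f y) - φ (f x)| ≤ 2 * L / N :=
    calc |φ (f y) - φ (f x)| ≤ L * |y - x| := hLip y (h₂ hy) x (h₁ hx)
      _ ≤ L * (2 / N) := by gcongr; exact abs_sub_le_of_mem_adjacent_cells hx hy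
      _ = 2 * L / N := by ring
  have hup := (abs_le.1 (hdist hx₁ hy₂)).2
  have hlow := (abs_le.1 (hdist hy₁ hx₂)).1
  rw [abs_le]
  constructor
  · linarith [hφ hm₁ (hrange₁ y₁ hy₁) hfy₁, hφ (hrange₂ x₂ hx₂) hm₂ hfx₂]
  · linarith [hφ (hrange₁ x₁ hx₁) hm₁ hfx₁, hφ hm₂ (hrange₂ y₂ hy₂) hfy₂]

lemma abs_sub_le_of_tendsto {g : ℝ → ℝ} {S : Set ℝ} {z l L : ℝ} [(𝓝[S] z).NeBot]
    (hg : Tendsto g (𝓝[S] z) (𝓝 l)) (hLip : ∀ x ∈ S, ∀ y ∈ S, |g x - g y| ≤ L * |x - y|)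
    {x : ℝ} (hx : x ∈ S) : |g x - l| ≤ L * |x - z| :=
  le_of_tendsto_of_tendsto ((tendsto_const_nhds.sub hg).abs)
    ((tendsto_const_nhds.sub (tendsto_id.mono_left nhdsWithin_le_nhds)).abs.const_mul L)
    (eventually_mem_nhdsWithin.mono fun y hy => hLip x hx y hy)

lemma abs_cellAverage_sub_trace_le {S : Set ℝ} {z l L : ℝ} [(𝓝[S] z).NeBot] (hN : 0 < N)
    (hf : Measurable f) (hφ : MonotoneOn φ (Icc 0 1)) (hφc : ContinuousOn φ (Icc 0 1))
    (hL : 0 ≤ L) (hrange : ∀ x ∈ S, f x ∈ Icc (0:ℝ) 1)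
    (hLip : ∀ x ∈ S, ∀ y ∈ S, |φ (f x) - φ (f y)| ≤ L * |x - y|)
    (hl : l ∈ Icc (0:ℝ) 1) (hlim : Tendsto f (𝓝[S] z) (𝓝 l))
    (hjS : cell N j ⊆ S) (hz : z ∈ Icc ((j : ℝ) / N) (((j : ℝ) + 1) / N)) :
    |φ (cellAverage f N j) - φ l| ≤ L / N := by
  have hφf : Tendsto (fun x => φ (f x)) (𝓝[S] z) (𝓝 (φ l)) :=
    (hφc l hl).tendsto.comp (tendsto_nhdsWithin_iff.2 ⟨hlim, eventually_mem_nhdsWithin.mono hrange⟩)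
  have hpt {x : ℝ} (hx : x ∈ cell N j) : |φ (f x) - φ l| ≤ L / N :=
    calc |φ (f x) - φ l| ≤ L * |x - z| := abs_sub_le_of_tendsto hφf hLip (hjS hx)
      _ ≤ L * (1 / N) := by gcongr; exact abs_sub_le_of_mem_cell hx hz
      _ = L / N := by ring
  have hrangej x (hx : x ∈ cell N j) := hrange x (hjS hx)
  obtain ⟨x, hx, y, hy, hfx, hfy⟩ := exists_le_cellAverage_le hN hf hrangej
  have hm := cellAverage_mem_Icc hN hf hrangej
  rw [abs_le]
  constructor
  · linarith [hφ (hrangej x hx) hm hfx, (abs_le.1 (hpt hx)).1]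
  · linarith [hφ hm (hrangej y hy) hfy, (abs_le.1 (hpt hy)).2]

end CellAverage

section InitialData

open Filter Topology

variable {N : ℕ} {j : ℤ}

lemma cell_subset_Ioo {α β : ℝ} (hN : 0 < N) (hα : α * N ≤ j) (hβ : (j : ℝ) + 1 ≤ β * N) :
    cell N j ⊆ Ioo α β := by
  have hN' : (0 : ℝ) < N := Nat.cast_pos.2 hN
  exact Ioo_subset_Ioo ((le_div_iff₀ hN').2 hα) ((div_le_iff₀ hN').2 hβ)

lemma cell_subset_Ioo_neg_one_zero (hN : 0 < N) (hj : -(N : ℤ) ≤ j) (hj0 : j < 0) :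
    cell N j ⊆ Ioo (-1) 0 := by
  have h₁ : ((-(N : ℤ) : ℤ) : ℝ) ≤ j := Int.cast_le.2 hj
  have h₂ : ((j + 1 : ℤ) : ℝ) ≤ 0 := Int.cast_nonpos.2 hj0
  push_cast at h₁ h₂
  exact cell_subset_Ioo hN (by linarith) (by linarith)

lemma cell_subset_Ioo_zero_one (hN : 0 < N) (hj0 : 0 ≤ j) (hj : j < N) :
    cell N j ⊆ Ioo 0 1 := by
  have h₁ : (0 : ℝ) ≤ j := Int.cast_nonneg hj0
  have h₂ : ((j + 1 : ℤ) : ℝ) ≤ (N : ℤ) := Int.cast_le.2 hj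
  push_cast at h₂
  exact cell_subset_Ioo hN (by linarith) (by linarith)

lemma abs_numFlux_initial_le {π₁ π₂ φ₁ φ₂ u₀ : ℝ → ℝ} {G₁ G₂ c d : ℝ → ℝ → ℝ}
    {δx L B u01 u02 ub uB : ℝ} {v : ℤ → ℝ} (hN : 0 < N) (hδx : δx = 1 / N)
    (h : MonotoneSchemeData π₁ π₂ φ₁ φ₂ G₁ G₂) (hφ₁c : ContinuousOn φ₁ (Icc 0 1))
    (hφ₂c : ContinuousOn φ₂ (Icc 0 1)) (hcd : IsInterfaceMap π₁ π₂ φ₁ φ₂ G₁ G₂ δx c d)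
    (hG₁ : ∀ a ∈ Icc (0:ℝ) 1, ∀ b ∈ Icc (0:ℝ) 1, |G₁ a b| ≤ B)
    (hG₂ : ∀ a ∈ Icc (0:ℝ) 1, ∀ b ∈ Icc (0:ℝ) 1, |G₂ a b| ≤ B)
    (hu₀ : Measurable u₀) (hu₀range : ∀ x ∈ Ioo (-1:ℝ) 1, u₀ x ∈ Icc (0:ℝ) 1) (hL : 0 ≤ L)
    (hLip₁ : ∀ x ∈ Ioo (-1:ℝ) 0, ∀ y ∈ Ioo (-1:ℝ) 0, |φ₁ (u₀ x) - φ₁ (u₀ y)| ≤ L * |x - y|)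
    (hLip₂ : ∀ x ∈ Ioo (0:ℝ) 1, ∀ y ∈ Ioo (0:ℝ) 1, |φ₂ (u₀ x) - φ₂ (u₀ y)| ≤ L * |x - y|)
    (hu01 : u01 ∈ Icc (0:ℝ) 1) (hu02 : u02 ∈ Icc (0:ℝ) 1)
    (hlim1 : Tendsto u₀ (𝓝[Ioo (-1:ℝ) 0] 0) (𝓝 u01))
    (hlim2 : Tendsto u₀ (𝓝[Ioo (0:ℝ) 1] 0) (𝓝 u02)) (hconn : Connects π₁ π₂ u01 u02)
    (hv : ∀ i ∈ Finset.Icc (-(N : ℤ)) (N - 1), v i = cellAverage u₀ N i)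
    (hj : -(N : ℤ) < j) (hjN : j < N) :
    |numFlux G₁ G₂ φ₁ φ₂ c δx N ub uB v j| ≤ B + 2 * L := by
  have hδx0 : 0 < δx := by rw [hδx]; positivity
  have hδxN (K : ℝ) : K / N = K * δx := by rw [hδx]; ring
  have hrange₁ : ∀ x ∈ Ioo (-1:ℝ) 0, u₀ x ∈ Icc (0:ℝ) 1 :=
    fun x hx => hu₀range x (Ioo_subset_Ioo_right zero_le_one hx)
  have hrange₂ : ∀ x ∈ Ioo (0:ℝ) 1, u₀ x ∈ Icc (0:ℝ) 1 :=
    fun x hx => hu₀range x (Ioo_subset_Ioo_left (by norm_num) hx)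
  rw [numFlux_congr (w := cellAverage u₀ N) (ub' := ub) (uB' := uB) hj hjN
    (hv _ (Finset.mem_Icc.2 ⟨by omega, by omega⟩)) (hv _ (Finset.mem_Icc.2 ⟨by omega, by omega⟩))]
  have hmem (i : ℤ) (hi : -(N : ℤ) ≤ i) (hiN : i < N) : cellAverage u₀ N i ∈ Icc (0:ℝ) 1 := by
    refine cellAverage_mem_Icc hN hu₀ fun x hx => ?_
    rcases lt_or_ge i 0 with hi0 | hi0
    · exact hrange₁ x (cell_subset_Ioo_neg_one_zero hN hi hi0 hx)
    · exact hrange₂ x (cell_subset_Ioo_zero_one hN hi0 hiN hx)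
  rcases lt_trichotomy j 0 with hj0 | rfl | hj0
  · rw [numFlux_of_neg hj hj0]
    refine abs_sub_div_le_add hδx0 (hG₁ _ (hmem _ (by omega) (by omega)) _ (hmem _ hj.le hjN)) ?_
    refine (abs_cellAverage_sub_le hN hu₀ h.φ₁_monotoneOn hL hrange₁ hLip₁
      (cell_subset_Ioo_neg_one_zero hN (by omega) (by omega))
      (cell_subset_Ioo_neg_one_zero hN hj.le hj0)).trans_eq (hδxN _)
  · have := right_nhdsWithin_Ioo_neBot (by norm_num : (-1:ℝ) < 0)
    have := left_nhdsWithin_Ioo_neBot (by norm_num : (0:ℝ) < 1)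
    rw [numFlux_zero hjN]
    refine abs_leftIfaceFlux_le h hδx0 hcd hG₁ hG₂ (hmem (-1) (by omega) (by omega))
      (hmem 0 (by omega) hjN) hu01 hu02 hconn ?_ ?_
    · exact (abs_cellAverage_sub_trace_le hN hu₀ h.φ₁_monotoneOn hφ₁c hL hrange₁ hLip₁ hu01
        hlim1 (cell_subset_Ioo_neg_one_zero hN (by omega) (by omega))
        (by simp [neg_div])).trans_eq (hδxN _)
    · exact (abs_cellAverage_sub_trace_le hN hu₀ h.φ₂_monotoneOn hφ₂c hL hrange₂ hLip₂ hu02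
        hlim2 (cell_subset_Ioo_zero_one hN le_rfl hjN) (by simp)).trans_eq (hδxN _)
  · rw [numFlux_of_pos hj0 hjN]
    refine abs_sub_div_le_add hδx0 (hG₂ _ (hmem _ (by omega) (by omega)) _ (hmem _ hj.le hjN)) ?_
    refine (abs_cellAverage_sub_le hN hu₀ h.φ₂_monotoneOn hL hrange₂ hLip₂
      (cell_subset_Ioo_zero_one hN (by omega) (by omega))
      (cell_subset_Ioo_zero_one hN hj0.le hjN)).trans_eq (hδxN _)

end InitialData

theorem stmt7_general
    (T : ℝ) (hT : 0 < T) (N M : ℕ) (hN : 0 < N) (hM : 0 < M)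
    (δx δt : ℝ) (hδxdef : δx = 1 / (N : ℝ)) (hδtdef : δt = T / (M : ℝ))
    (ϕ₁ ϕ₂ : ℝ) (hϕ₁ : ϕ₁ ∈ Ioo (0:ℝ) 1) (hϕ₂ : ϕ₂ ∈ Ioo (0:ℝ) 1)
    (π₁ π₂ φ₁ φ₂ : ℝ → ℝ) (G₁ G₂ : ℝ → ℝ → ℝ)
    (hπ₁mono : StrictMonoOn π₁ (Icc 0 1))
    (hπ₂mono : StrictMonoOn π₂ (Icc 0 1))
    (hφ₁mono : StrictMonoOn φ₁ (Icc 0 1)) (hφ₁lip : ∃ K, LipschitzOnWith K φ₁ (Icc 0 1))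
    (hφ₂mono : StrictMonoOn φ₂ (Icc 0 1)) (hφ₂lip : ∃ K, LipschitzOnWith K φ₂ (Icc 0 1))
    (hG₁lip : ∃ K, LipschitzOnWith K (fun p : ℝ × ℝ => G₁ p.1 p.2) (Icc 0 1 ×ˢ Icc 0 1))
    (hG₁mono : ∀ b ∈ Icc (0:ℝ) 1, MonotoneOn (fun a => G₁ a b) (Icc 0 1))
    (hG₁anti : ∀ a ∈ Icc (0:ℝ) 1, AntitoneOn (fun b => G₁ a b) (Icc 0 1))
    (hG₂lip : ∃ K, LipschitzOnWith K (fun p : ℝ × ℝ => G₂ p.1 p.2) (Icc 0 1 ×ˢ Icc 0 1))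
    (hG₂mono : ∀ b ∈ Icc (0:ℝ) 1, MonotoneOn (fun a => G₂ a b) (Icc 0 1))
    (hG₂anti : ∀ a ∈ Icc (0:ℝ) 1, AntitoneOn (fun b => G₂ a b) (Icc 0 1))
    (c d : ℝ → ℝ → ℝ)
    (hcd : ∀ a ∈ Icc (0:ℝ) 1, ∀ b ∈ Icc (0:ℝ) 1,
      (c a b ∈ Icc (0:ℝ) 1 ∧ d a b ∈ Icc (0:ℝ) 1 ∧
        G₁ a (c a b) - 2 * (φ₁ (c a b) - φ₁ a) / δx
          = G₂ (d a b) b - 2 * (φ₂ b - φ₂ (d a b)) / δx ∧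
        Connects π₁ π₂ (c a b) (d a b)) ∧
      ∀ c' d' : ℝ, c' ∈ Icc (0:ℝ) 1 → d' ∈ Icc (0:ℝ) 1 →
        G₁ a c' - 2 * (φ₁ c' - φ₁ a) / δx = G₂ d' b - 2 * (φ₂ b - φ₂ d') / δx →
        Connects π₁ π₂ c' d' → c' = c a b ∧ d' = d a b)
    (ubar ubbar : ℕ → ℝ)
    (hubar : ∀ n, 1 ≤ n → n ≤ M → ubar n ∈ Icc (0:ℝ) 1)
    (hubbar : ∀ n, 1 ≤ n → n ≤ M → ubbar n ∈ Icc (0:ℝ) 1)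
    (u₀ : ℝ → ℝ) (hu₀meas : Measurable u₀)
    (hu₀range : ∀ x ∈ Ioo (-1:ℝ) 1, u₀ x ∈ Icc (0:ℝ) 1)
    (L : ℝ) (hL : 0 ≤ L)
    (hLip₁ : ∀ x ∈ Ioo (-1:ℝ) 0, ∀ y ∈ Ioo (-1:ℝ) 0, |φ₁ (u₀ x) - φ₁ (u₀ y)| ≤ L * |x - y|)
    (hLip₂ : ∀ x ∈ Ioo (0:ℝ) 1, ∀ y ∈ Ioo (0:ℝ) 1, |φ₂ (u₀ x) - φ₂ (u₀ y)| ≤ L * |x - y|)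
    (u01 u02 : ℝ) (hu01 : u01 ∈ Icc (0:ℝ) 1) (hu02 : u02 ∈ Icc (0:ℝ) 1)
    (hlim1 : Filter.Tendsto u₀ (nhdsWithin 0 (Ioo (-1:ℝ) 0)) (nhds u01))
    (hlim2 : Filter.Tendsto u₀ (nhdsWithin 0 (Ioo (0:ℝ) 1)) (nhds u02))
    (hconn : Connects π₁ π₂ u01 u02)
    (u0d : ℤ → ℝ)
    (hu0d : ∀ j : ℤ, u0d j = (N : ℝ) * ∫ x in ((j : ℝ) / (N : ℝ))..(((j : ℝ) + 1) / (N : ℝ)), u₀ x)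
    (u : ℕ → ℤ → ℝ)
    (hu : IsDiscreteSolution G₁ G₂ φ₁ φ₂ c ϕ₁ ϕ₂ δx δt (N : ℤ) M ubar ubbar u)
    (hu0 : ∀ j ∈ Finset.Icc (-(N : ℤ)) ((N : ℤ) - 1), u 0 j = u0d j) :
    ∀ n, 1 ≤ n → n ≤ M →
      ∀ j ∈ Finset.Icc (-(N : ℤ) + 1) ((N : ℤ) - 1),
        |numFlux G₁ G₂ φ₁ φ₂ c δx (N : ℤ) (ubar n) (ubbar n) (u n) j|
          ≤ max (sSup {r : ℝ | ∃ a ∈ Icc (0:ℝ) 1, ∃ b ∈ Icc (0:ℝ) 1, r = |G₁ a b|})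
                (sSup {r : ℝ | ∃ a ∈ Icc (0:ℝ) 1, ∃ b ∈ Icc (0:ℝ) 1, r = |G₂ a b|})
            + 2 * L := by
  have hN' : (0 : ℤ) < N := Nat.cast_pos.2 hN
  have hδx : 0 < δx := by rw [hδxdef]; positivity
  have hδt : 0 < δt := by rw [hδtdef]; positivity
  have h : MonotoneSchemeData π₁ π₂ φ₁ φ₂ G₁ G₂ := ⟨hπ₁mono, hπ₂mono, hφ₁mono.monotoneOn,
    hφ₂mono.monotoneOn, hG₁mono, hG₁anti, hG₂mono, hG₂anti⟩
  have hcd' : IsInterfaceMap π₁ π₂ φ₁ φ₂ G₁ G₂ δx c d := fun a ha b hb => (hcd a ha b hb).1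
  set B := max (sSup {r : ℝ | ∃ a ∈ Icc (0:ℝ) 1, ∃ b ∈ Icc (0:ℝ) 1, r = |G₁ a b|})
    (sSup {r : ℝ | ∃ a ∈ Icc (0:ℝ) 1, ∃ b ∈ Icc (0:ℝ) 1, r = |G₂ a b|})
  have hG₁B (a) (ha : a ∈ Icc (0:ℝ) 1) (b) (hb : b ∈ Icc (0:ℝ) 1) : |G₁ a b| ≤ B :=
    (abs_le_sSup_abs hG₁lip.choose_spec.continuousOn ha hb).trans (le_max_left _ _)
  have hG₂B (a) (ha : a ∈ Icc (0:ℝ) 1) (b) (hb : b ∈ Icc (0:ℝ) 1) : |G₂ a b| ≤ B :=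
    (abs_le_sSup_abs hG₂lip.choose_spec.continuousOn ha hb).trans (le_max_right _ _)
  have hB : B ≤ B + 2 * L := le_add_of_nonneg_right (by positivity)
  have key : ∀ n ≤ M, ∀ j, -(N : ℤ) < j → j < N →
      |numFlux G₁ G₂ φ₁ φ₂ c δx N (ubar n) (ubbar n) (u n) j| ≤ B + 2 * L := by
    intro n
    induction n with
    | zero =>
      exact fun _ j hj hjN => abs_numFlux_initial_le hN hδxdef h
        hφ₁lip.choose_spec.continuousOn hφ₂lip.choose_spec.continuousOn hcd'
        hG₁B hG₂B
        hu₀meas hu₀range hL hLip₁ hLip₂ hu01 hu02 hlim1 hlim2 hconn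
        (fun i hi => (hu0 i hi).trans (hu0d i)) hj hjN
    | succ n ih =>
      intro hn j hj hjN
      exact abs_numFlux_succ_le h hcd' hϕ₁.1 hϕ₂.1 hδx hδt hu hn hN' (hubar _ (by omega) hn)
        (hubbar _ (by omega) hn) (fun a ha b hb => (hG₁B a ha b hb).trans hB)
        (fun a ha b hb => (hG₂B a ha b hb).trans hB) (ih (by omega)) j
        (Finset.mem_Icc.2 ⟨hj.le, hjN.le⟩)
  intro n _ hnM j hj
  rw [Finset.mem_Icc] at hj
  exact key n hnM j (by omega) (by omega)

/-- Uniform bound on the interior discrete fluxes of the discrete solution, at every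
time level, by `max_i sup |G_i| + 2L`. -/
theorem stmt7
    (T : ℝ) (hT : 0 < T) (N M : ℕ) (hN : 0 < N) (hM : 0 < M)
    (δx δt : ℝ) (hδxdef : δx = 1 / (N : ℝ)) (hδtdef : δt = T / (M : ℝ))
    (ϕ₁ ϕ₂ : ℝ) (hϕ₁ : ϕ₁ ∈ Ioo (0:ℝ) 1) (hϕ₂ : ϕ₂ ∈ Ioo (0:ℝ) 1)
    (π₁ π₂ φ₁ φ₂ : ℝ → ℝ) (G₁ G₂ : ℝ → ℝ → ℝ)
    (hπ₁mono : StrictMonoOn π₁ (Icc 0 1)) (hπ₁lip : ∃ K, LipschitzOnWith K π₁ (Icc 0 1))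
    (hπ₂mono : StrictMonoOn π₂ (Icc 0 1)) (hπ₂lip : ∃ K, LipschitzOnWith K π₂ (Icc 0 1))
    (hφ₁mono : StrictMonoOn φ₁ (Icc 0 1)) (hφ₁lip : ∃ K, LipschitzOnWith K φ₁ (Icc 0 1))
    (hφ₁zero : φ₁ 0 = 0)
    (hφ₂mono : StrictMonoOn φ₂ (Icc 0 1)) (hφ₂lip : ∃ K, LipschitzOnWith K φ₂ (Icc 0 1))
    (hφ₂zero : φ₂ 0 = 0)
    (hG₁lip : ∃ K, LipschitzOnWith K (fun p : ℝ × ℝ => G₁ p.1 p.2) (Icc 0 1 ×ˢ Icc 0 1))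
    (hG₁mono : ∀ b ∈ Icc (0:ℝ) 1, MonotoneOn (fun a => G₁ a b) (Icc 0 1))
    (hG₁anti : ∀ a ∈ Icc (0:ℝ) 1, AntitoneOn (fun b => G₁ a b) (Icc 0 1))
    (hG₂lip : ∃ K, LipschitzOnWith K (fun p : ℝ × ℝ => G₂ p.1 p.2) (Icc 0 1 ×ˢ Icc 0 1))
    (hG₂mono : ∀ b ∈ Icc (0:ℝ) 1, MonotoneOn (fun a => G₂ a b) (Icc 0 1))
    (hG₂anti : ∀ a ∈ Icc (0:ℝ) 1, AntitoneOn (fun b => G₂ a b) (Icc 0 1))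
    (c d : ℝ → ℝ → ℝ)
    (hcd : ∀ a ∈ Icc (0:ℝ) 1, ∀ b ∈ Icc (0:ℝ) 1,
      (c a b ∈ Icc (0:ℝ) 1 ∧ d a b ∈ Icc (0:ℝ) 1 ∧
        G₁ a (c a b) - 2 * (φ₁ (c a b) - φ₁ a) / δx
          = G₂ (d a b) b - 2 * (φ₂ b - φ₂ (d a b)) / δx ∧
        Connects π₁ π₂ (c a b) (d a b)) ∧
      ∀ c' d' : ℝ, c' ∈ Icc (0:ℝ) 1 → d' ∈ Icc (0:ℝ) 1 →
        G₁ a c' - 2 * (φ₁ c' - φ₁ a) / δx = G₂ d' b - 2 * (φ₂ b - φ₂ d') / δx →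
        Connects π₁ π₂ c' d' → c' = c a b ∧ d' = d a b)
    (ubar ubbar : ℕ → ℝ)
    (hubar : ∀ n, 1 ≤ n → n ≤ M → ubar n ∈ Icc (0:ℝ) 1)
    (hubbar : ∀ n, 1 ≤ n → n ≤ M → ubbar n ∈ Icc (0:ℝ) 1)
    (u₀ : ℝ → ℝ) (hu₀meas : Measurable u₀)
    (hu₀range : ∀ x ∈ Ioo (-1:ℝ) 1, u₀ x ∈ Icc (0:ℝ) 1)
    (L : ℝ) (hL : 0 ≤ L)
    (hLip₁ : ∀ x ∈ Ioo (-1:ℝ) 0, ∀ y ∈ Ioo (-1:ℝ) 0, |φ₁ (u₀ x) - φ₁ (u₀ y)| ≤ L * |x - y|)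
    (hLip₂ : ∀ x ∈ Ioo (0:ℝ) 1, ∀ y ∈ Ioo (0:ℝ) 1, |φ₂ (u₀ x) - φ₂ (u₀ y)| ≤ L * |x - y|)
    (u01 u02 : ℝ) (hu01 : u01 ∈ Icc (0:ℝ) 1) (hu02 : u02 ∈ Icc (0:ℝ) 1)
    (hlim1 : Filter.Tendsto u₀ (nhdsWithin 0 (Ioo (-1:ℝ) 0)) (nhds u01))
    (hlim2 : Filter.Tendsto u₀ (nhdsWithin 0 (Ioo (0:ℝ) 1)) (nhds u02))
    (hconn : Connects π₁ π₂ u01 u02)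
    (u0d : ℤ → ℝ)
    (hu0d : ∀ j : ℤ, u0d j = (N : ℝ) * ∫ x in ((j : ℝ) / (N : ℝ))..(((j : ℝ) + 1) / (N : ℝ)), u₀ x)
    (u : ℕ → ℤ → ℝ)
    (hu : IsDiscreteSolution G₁ G₂ φ₁ φ₂ c ϕ₁ ϕ₂ δx δt (N : ℤ) M ubar ubbar u)
    (hu0 : ∀ j ∈ Finset.Icc (-(N : ℤ)) ((N : ℤ) - 1), u 0 j = u0d j) :
    ∀ n, 1 ≤ n → n ≤ M →
      ∀ j ∈ Finset.Icc (-(N : ℤ) + 1) ((N : ℤ) - 1),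
        |numFlux G₁ G₂ φ₁ φ₂ c δx (N : ℤ) (ubar n) (ubbar n) (u n) j|
          ≤ max (sSup {r : ℝ | ∃ a ∈ Icc (0:ℝ) 1, ∃ b ∈ Icc (0:ℝ) 1, r = |G₁ a b|})
                (sSup {r : ℝ | ∃ a ∈ Icc (0:ℝ) 1, ∃ b ∈ Icc (0:ℝ) 1, r = |G₂ a b|})
            + 2 * L :=
  stmt7_general T hT N M hN hM δx δt hδxdef hδtdef ϕ₁ ϕ₂ hϕ₁ hϕ₂ π₁ π₂ φ₁ φ₂ G₁ G₂ hπ₁mono hπ₂mono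
    hφ₁mono hφ₁lip hφ₂mono hφ₂lip hG₁lip hG₁mono hG₁anti hG₂lip hG₂mono hG₂anti c d hcd ubar ubbar
    hubar hubbar u₀ hu₀meas hu₀range L hL hLip₁ hLip₂ u01 u02 hu01 hu02 hlim1 hlim2 hconn u0d hu0d u
    hu hu0
end
end

section
/- For all a,b∈[0,1]: (i) the oriented integral ∫_a^b π'(s)(f(s)−G(a,b))ds is nonnegative; and consequently (ii) Ψ(b)−Ψ(a) ≤ π(a)(G(a,b)−f(a)) − π(b)(G(a,b)−f(b)). -/
open Set MeasureTheory

/-!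
(i) For `a ≤ s ≤ b` monotonicity of the flux gives `G(a,b) ≤ G(s,b) ≤ G(s,s) = f(s)`, and the
reverse inequalities hold for `b ≤ s ≤ a`, so the integrand `π'(s)(f(s) - G(a,b))` has the sign
of the orientation. (ii) Integration by parts for the absolutely continuous `π` and `f` gives
`Ψ(b) - Ψ(a) = π(b)f(b) - π(a)f(a) - ∫_a^b π'f`, and `∫_a^b π'f` is the integral of (i) plus
`G(a,b)(π(b) - π(a))`; so `Ψ(b) - Ψ(a)` is the right-hand side of (ii) minus that integral.
-/

section Primitive

variable {u u' v v' : ℝ → ℝ} {a b : ℝ}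

theorem absolutelyContinuousOnInterval_const_add_integral (hu' : IntervalIntegrable u' volume a b)
    (c : ℝ) : AbsolutelyContinuousOnInterval (fun x ↦ c + ∫ t in a..x, u' t) a b :=
  ((LipschitzWith.const c).lipschitzOnWith.absolutelyContinuousOnInterval).add
    (hu'.absolutelyContinuousOnInterval_intervalIntegral left_mem_uIcc)

theorem ae_deriv_const_add_integral (hu' : IntervalIntegrable u' volume a b) (c : ℝ) :
    ∀ᵐ x, x ∈ uIcc a b → deriv (fun x ↦ c + ∫ t in a..x, u' t) x = u' x := by
  filter_upwards [hu'.ae_hasDerivAt_integral] with x hx hxab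
  exact ((hx hxab a left_mem_uIcc).const_add c).deriv

theorem continuousOn_of_sub_eq_integral (hu' : IntervalIntegrable u' volume a b)
    (hu : ∀ x ∈ uIcc a b, u x - u a = ∫ t in a..x, u' t) : ContinuousOn u (uIcc a b) :=
  (absolutelyContinuousOnInterval_const_add_integral hu' (u a)).continuousOn.congr
    fun x hx ↦ eq_add_of_sub_eq' (hu x hx)

theorem integral_mul_eq_sub_sub_integral_of_sub_eq_integral
    (hu' : IntervalIntegrable u' volume a b) (hv' : IntervalIntegrable v' volume a b)
    (hu : ∀ x ∈ uIcc a b, u x - u a = ∫ t in a..x, u' t)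
    (hv : ∀ x ∈ uIcc a b, v x - v a = ∫ t in a..x, v' t) :
    ∫ x in a..b, u x * v' x = u b * v b - u a * v a - ∫ x in a..b, u' x * v x := by
  set U := fun x ↦ u a + ∫ t in a..x, u' t
  set V := fun x ↦ v a + ∫ t in a..x, v' t
  have hUu : EqOn u U (uIcc a b) := fun x hx ↦ eq_add_of_sub_eq' (hu x hx)
  have hVv : EqOn v V (uIcc a b) := fun x hx ↦ eq_add_of_sub_eq' (hv x hx)
  have hIBP := AbsolutelyContinuousOnInterval.integral_mul_deriv_eq_deriv_mul
    (absolutelyContinuousOnInterval_const_add_integral hu' (u a))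
    (absolutelyContinuousOnInterval_const_add_integral hv' (v a))
  have hL : ∫ x in a..b, U x * deriv V x = ∫ x in a..b, u x * v' x := by
    refine intervalIntegral.integral_congr_ae ?_
    filter_upwards [ae_deriv_const_add_integral hv' (v a)] with x hx hxab
    rw [hx (uIoc_subset_uIcc hxab), hUu (uIoc_subset_uIcc hxab)]
  have hR : ∫ x in a..b, deriv U x * V x = ∫ x in a..b, u' x * v x := by
    refine intervalIntegral.integral_congr_ae ?_
    filter_upwards [ae_deriv_const_add_integral hu' (u a)] with x hx hxab
    rw [hx (uIoc_subset_uIcc hxab), hVv (uIoc_subset_uIcc hxab)]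
  rw [hL, hR] at hIBP
  rw [hIBP, ← hu b right_mem_uIcc, ← hv b right_mem_uIcc, intervalIntegral.integral_same,
    intervalIntegral.integral_same]
  ring

end Primitive

section Flux

variable {S : Set ℝ} {f w : ℝ → ℝ} {G : ℝ → ℝ → ℝ} {a b s : ℝ}

theorem flux_le_of_le_of_le (hGmono : ∀ b ∈ S, MonotoneOn (fun a => G a b) S)
    (hGanti : ∀ a ∈ S, AntitoneOn (fun b => G a b) S) (hGdiag : ∀ s ∈ S, G s s = f s)
    (ha : a ∈ S) (hb : b ∈ S) (hs : s ∈ S) (has : a ≤ s) (hsb : s ≤ b) : G a b ≤ f s :=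
  calc G a b ≤ G s b := hGmono b hb ha hs has
    _ ≤ G s s := hGanti s hs hs hb hsb
    _ = f s := hGdiag s hs

theorem le_flux_of_le_of_le (hGmono : ∀ b ∈ S, MonotoneOn (fun a => G a b) S)
    (hGanti : ∀ a ∈ S, AntitoneOn (fun b => G a b) S) (hGdiag : ∀ s ∈ S, G s s = f s)
    (ha : a ∈ S) (hb : b ∈ S) (hs : s ∈ S) (hbs : b ≤ s) (hsa : s ≤ a) : f s ≤ G a b :=
  calc f s = G s s := (hGdiag s hs).symm
    _ ≤ G s b := hGanti s hs hb hs hbs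
    _ ≤ G a b := hGmono b hb hs ha hsa

theorem integral_mul_sub_flux_nonneg (hS : S.OrdConnected)
    (hGmono : ∀ b ∈ S, MonotoneOn (fun a => G a b) S)
    (hGanti : ∀ a ∈ S, AntitoneOn (fun b => G a b) S) (hGdiag : ∀ s ∈ S, G s s = f s)
    (hw : ∀ s ∈ S, 0 ≤ w s) (ha : a ∈ S) (hb : b ∈ S) :
    0 ≤ ∫ s in a..b, w s * (f s - G a b) := by
  rcases le_total a b with hab | hba
  · refine intervalIntegral.integral_nonneg hab fun s hs ↦ ?_
    have hsS : s ∈ S := hS.out ha hb hs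
    exact mul_nonneg (hw s hsS)
      (sub_nonneg.2 (flux_le_of_le_of_le hGmono hGanti hGdiag ha hb hsS hs.1 hs.2))
  · rw [intervalIntegral.integral_symm, ← intervalIntegral.integral_neg]
    refine intervalIntegral.integral_nonneg hba fun s hs ↦ ?_
    have hsS : s ∈ S := hS.out hb ha hs
    exact neg_nonneg.2 (mul_nonpos_of_nonneg_of_nonpos (hw s hsS)
      (sub_nonpos.2 (le_flux_of_le_of_le hGmono hGanti hGdiag ha hb hsS hs.1 hs.2)))

end Flux

theorem stmt10_general
    (f π fd πd : ℝ → ℝ) (G : ℝ → ℝ → ℝ)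
    (hfdint : IntervalIntegrable fd MeasureTheory.volume 0 1)
    (hfrep : ∀ s ∈ Icc (0:ℝ) 1, ∀ t ∈ Icc (0:ℝ) 1, f t - f s = ∫ a in s..t, fd a)
    (hπdnonneg : ∀ s ∈ Icc (0:ℝ) 1, 0 ≤ πd s)
    (hπdint : IntervalIntegrable πd MeasureTheory.volume 0 1)
    (hπrep : ∀ s ∈ Icc (0:ℝ) 1, ∀ t ∈ Icc (0:ℝ) 1, π t - π s = ∫ a in s..t, πd a)
    (hGmono : ∀ b ∈ Icc (0:ℝ) 1, MonotoneOn (fun a => G a b) (Icc 0 1))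
    (hGanti : ∀ a ∈ Icc (0:ℝ) 1, AntitoneOn (fun b => G a b) (Icc 0 1))
    (hGdiag : ∀ s ∈ Icc (0:ℝ) 1, G s s = f s)
    (a b : ℝ) (ha : a ∈ Icc (0:ℝ) 1) (hb : b ∈ Icc (0:ℝ) 1) :
    0 ≤ (∫ s in a..b, πd s * (f s - G a b)) ∧
    (∫ τ in (0:ℝ)..b, π τ * fd τ) - (∫ τ in (0:ℝ)..a, π τ * fd τ)
      ≤ π a * (G a b - f a) - π b * (G a b - f b) := by
  have hunit : uIcc (0:ℝ) 1 = Icc 0 1 := uIcc_of_le zero_le_one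
  have h0 : (0:ℝ) ∈ Icc (0:ℝ) 1 := left_mem_Icc.2 zero_le_one
  have hab : uIcc a b ⊆ uIcc 0 1 := hunit ▸ ordConnected_Icc.uIcc_subset ha hb
  have hnonneg :=
    integral_mul_sub_flux_nonneg ordConnected_Icc hGmono hGanti hGdiag hπdnonneg ha hb
  refine ⟨hnonneg, ?_⟩
  have hπdab := hπdint.mono_set hab
  have hfdab := hfdint.mono_set hab
  have hπab : ∀ x ∈ uIcc a b, π x - π a = ∫ t in a..x, πd t := fun x hx ↦
    hπrep a ha x (hunit ▸ hab hx)
  have hfab : ∀ x ∈ uIcc a b, f x - f a = ∫ t in a..x, fd t := fun x hx ↦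
    hfrep a ha x (hunit ▸ hab hx)
  have hπfd : IntervalIntegrable (fun τ ↦ π τ * fd τ) volume 0 1 :=
    hfdint.continuousOn_mul (continuousOn_of_sub_eq_integral hπdint fun x hx ↦
      hπrep 0 h0 x (hunit ▸ hx))
  have hΨ : (∫ τ in (0:ℝ)..b, π τ * fd τ) - (∫ τ in (0:ℝ)..a, π τ * fd τ)
      = ∫ τ in a..b, π τ * fd τ :=
    intervalIntegral.integral_interval_sub_left
      (hπfd.mono_set (uIcc_subset_uIcc_left (hunit ▸ hb)))
      (hπfd.mono_set (uIcc_subset_uIcc_left (hunit ▸ ha)))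
  have hparts := integral_mul_eq_sub_sub_integral_of_sub_eq_integral hπdab hfdab hπab hfab
  have hsplit : ∫ s in a..b, πd s * (f s - G a b)
      = (∫ s in a..b, πd s * f s) - (π b - π a) * G a b := by
    simp only [mul_sub]
    rw [intervalIntegral.integral_sub (hπdab.mul_continuousOn
        (continuousOn_of_sub_eq_integral hfdab hfab)) (hπdab.mul_const _),
      intervalIntegral.integral_mul_const, hπab b right_mem_uIcc]
  rw [hΨ, hparts]
  linarith

/-- For a monotone numerical flux `G` consistent with `f`, the oriented integral
`∫_a^b π'(s)(f(s) - G(a,b)) ds` is nonnegative, and consequently, with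
`Ψ(s) = ∫₀^s π(τ)f'(τ)dτ`,
`Ψ(b) - Ψ(a) ≤ π(a)(G(a,b) - f(a)) - π(b)(G(a,b) - f(b))`. -/
theorem stmt10
    (f π fd πd : ℝ → ℝ) (G : ℝ → ℝ → ℝ)
    (hflip : ∃ K, LipschitzOnWith K f (Icc 0 1))
    (hπlip : ∃ K, LipschitzOnWith K π (Icc 0 1))
    (hπmono : MonotoneOn π (Icc 0 1))
    (hfdint : IntervalIntegrable fd MeasureTheory.volume 0 1)
    (hfrep : ∀ s ∈ Icc (0:ℝ) 1, ∀ t ∈ Icc (0:ℝ) 1, f t - f s = ∫ a in s..t, fd a)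
    (hπdnonneg : ∀ s ∈ Icc (0:ℝ) 1, 0 ≤ πd s)
    (hπdint : IntervalIntegrable πd MeasureTheory.volume 0 1)
    (hπrep : ∀ s ∈ Icc (0:ℝ) 1, ∀ t ∈ Icc (0:ℝ) 1, π t - π s = ∫ a in s..t, πd a)
    (hGmono : ∀ b ∈ Icc (0:ℝ) 1, MonotoneOn (fun a => G a b) (Icc 0 1))
    (hGanti : ∀ a ∈ Icc (0:ℝ) 1, AntitoneOn (fun b => G a b) (Icc 0 1))
    (hGdiag : ∀ s ∈ Icc (0:ℝ) 1, G s s = f s)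
    (a b : ℝ) (ha : a ∈ Icc (0:ℝ) 1) (hb : b ∈ Icc (0:ℝ) 1) :
    0 ≤ (∫ s in a..b, πd s * (f s - G a b)) ∧
    (∫ τ in (0:ℝ)..b, π τ * fd τ) - (∫ τ in (0:ℝ)..a, π τ * fd τ)
      ≤ π a * (G a b - f a) - π b * (G a b - f b) :=
  stmt10_general f π fd πd G hfdint hfrep hπdnonneg hπdint hπrep hGmono hGanti hGdiag a b ha hb
end

section
/- For every η∈ℝ and with Ω_η = {x∈(α,β) : x+η∈(α,β)}, one has ∫₀^T ∫_{Ω_η} (z(x+η,t)−z(x,t))² dx dt ≤ |z|²_{1,D} · |η| · (|η|+2δx). -/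
open Set MeasureTheory

/-!
For fixed `t`, `z(·, t)` agrees off the grid with a step function `s`. For `η ≥ 0`, `s` jumps
between `x` and `x + η` exactly at the grid points `x_j ∈ (x, x + η]`, of which there are at most
`η / δx + 1`; by Cauchy–Schwarz `(s(x + η) - s(x))² ≤ (η / δx + 1) ∑_j D_j² 1[x_j - η ≤ x < x_j]`
with `D_j` the jump at `x_j`. Each indicator integrates to `η`, which gives the sharper factor
`η (η + δx)`; `η < 0` reduces to `-η` by the substitution `x ↦ x - η`, and the time integral is a
sum over the `M` time slabs.
-/

/-- The piecewise constant function taking the value `v j` on the `j`-th cell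
`[α + (j - 1) δx, α + j δx)`. -/
noncomputable def gridStep (α δx : ℝ) (v : ℕ → ℝ) (x : ℝ) : ℝ :=
  v (⌊(x - α) / δx⌋₊ + 1)

section Grid

variable {α δx x η : ℝ}

lemma floor_lt_iff_lt_gridPoint (hδx : 0 < δx) (hx : α ≤ x) (j : ℕ) :
    ⌊(x - α) / δx⌋₊ < j ↔ x < α + j * δx := by
  rw [Nat.floor_lt (div_nonneg (sub_nonneg.2 hx) hδx.le), div_lt_iff₀ hδx, sub_lt_iff_lt_add']

lemma le_floor_iff_gridPoint_le (hδx : 0 < δx) (hx : α ≤ x) (j : ℕ) :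
    j ≤ ⌊(x - α) / δx⌋₊ ↔ α + j * δx ≤ x := by
  rw [Nat.le_floor_iff (div_nonneg (sub_nonneg.2 hx) hδx.le), le_div_iff₀ hδx, le_sub_iff_add_le']

lemma mem_Ico_floor_iff (hδx : 0 < δx) (hx : α ≤ x) (hη : 0 ≤ η) (j : ℕ) :
    j ∈ Finset.Ico (⌊(x - α) / δx⌋₊ + 1) (⌊(x + η - α) / δx⌋₊ + 1) ↔
      x ∈ Ico (α + j * δx - η) (α + j * δx) := by
  rw [Finset.mem_Ico, Nat.add_one_le_iff, Nat.lt_add_one_iff, floor_lt_iff_lt_gridPoint hδx hx,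
    le_floor_iff_gridPoint_le hδx (by linarith), Set.mem_Ico, sub_le_iff_le_add, and_comm]

lemma natFloor_sub_natFloor_le {u w : ℝ} (hu : 0 ≤ u) (huw : u ≤ w) :
    ((⌊w⌋₊ - ⌊u⌋₊ : ℕ) : ℝ) ≤ w - u + 1 := by
  rw [Nat.cast_sub (Nat.floor_mono huw)]
  linarith [Nat.floor_le (hu.trans huw), Nat.lt_floor_add_one u]

lemma gridStep_translate_sub_sq_le (hδx : 0 < δx) (hx : α ≤ x) (hη : 0 ≤ η) (v : ℕ → ℝ) :
    (gridStep α δx v (x + η) - gridStep α δx v x) ^ 2 ≤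
      (η / δx + 1) * ∑ j ∈ Finset.Ico (⌊(x - α) / δx⌋₊ + 1) (⌊(x + η - α) / δx⌋₊ + 1),
        (v (j + 1) - v j) ^ 2 := by
  have hmono : (x - α) / δx ≤ (x + η - α) / δx := by gcongr; linarith
  have hcard : ((Finset.Ico (⌊(x - α) / δx⌋₊ + 1) (⌊(x + η - α) / δx⌋₊ + 1)).card : ℝ) ≤
      η / δx + 1 := by
    rw [Nat.card_Ico, Nat.add_sub_add_right]
    calc _ ≤ (x + η - α) / δx - (x - α) / δx + 1 :=
          natFloor_sub_natFloor_le (div_nonneg (sub_nonneg.2 hx) hδx.le) hmono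
      _ = η / δx + 1 := by ring
  rw [gridStep, gridStep, ← Finset.sum_Ico_sub v (by gcongr)]
  exact sq_sum_le_card_mul_sum_sq.trans
    (mul_le_mul_of_nonneg_right hcard (Finset.sum_nonneg fun _ _ => sq_nonneg _))

lemma sum_Ico_floor_eq_sum_indicator {N : ℕ} (hδx : 0 < δx) (hx : α < x)
    (hxη : x + η < α + N * δx) (hη : 0 ≤ η) (w : ℕ → ℝ) :
    ∑ j ∈ Finset.Ico (⌊(x - α) / δx⌋₊ + 1) (⌊(x + η - α) / δx⌋₊ + 1), w j =
      ∑ j ∈ Finset.Icc 1 (N - 1),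
        (Ico (α + j * δx - η) (α + j * δx)).indicator (fun _ => w j) x := by
  have hN : ⌊(x + η - α) / δx⌋₊ < N := (floor_lt_iff_lt_gridPoint hδx (by linarith) N).2 hxη
  simp only [indicator_apply]
  rw [← Finset.sum_filter]
  congr 1
  ext j
  rw [Finset.mem_filter, ← mem_Ico_floor_iff hδx hx.le hη, Finset.mem_Icc, Finset.mem_Ico]
  omega

lemma measurableSet_translate_inter {s : Set ℝ} (hs : MeasurableSet s) (η : ℝ) :
    MeasurableSet {x | x ∈ s ∧ x + η ∈ s} :=
  hs.inter (hs.preimage (measurable_add_const η))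

lemma setIntegral_translate_sub_sq_neg (g : ℝ → ℝ) (s : Set ℝ) (η : ℝ) :
    ∫ x in {x | x ∈ s ∧ x + η ∈ s}, (g (x + η) - g x) ^ 2 =
      ∫ x in {x | x ∈ s ∧ x + -η ∈ s}, (g (x + -η) - g x) ^ 2 := by
  rw [← (measurePreserving_add_right volume (-η)).setIntegral_preimage_emb
    (measurableEmbedding_addRight (-η))]
  congr 1
  case e_μ =>
    congr 1
    ext x
    simp only [mem_preimage, Set.mem_ofPred_eq, neg_add_cancel_right]
    exact and_comm
  case e_f =>
    ext x
    rw [neg_add_cancel_right]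
    ring

lemma integral_gridStep_translate_sub_sq_le_of_nonneg (hδx : 0 < δx) (hη : 0 ≤ η) (N : ℕ)
    (v : ℕ → ℝ) :
    ∫ x in {x | x ∈ Ioo α (α + N * δx) ∧ x + η ∈ Ioo α (α + N * δx)},
        (gridStep α δx v (x + η) - gridStep α δx v x) ^ 2
      ≤ (∑ j ∈ Finset.Icc 1 (N - 1), δx * ((v (j + 1) - v j) / δx) ^ 2) * η * (η + δx) := by
  set I : ℕ → ℝ → ℝ := fun j => (Ico (α + j * δx - η) (α + j * δx)).indicator
    (fun _ => (v (j + 1) - v j) ^ 2)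
  set G : ℝ → ℝ := fun x => (η / δx + 1) * ∑ j ∈ Finset.Icc 1 (N - 1), I j x
  have hI : ∀ j, Integrable (I j) := fun j =>
    (integrable_indicator_iff measurableSet_Ico).2 (integrableOn_const measure_Ico_lt_top.ne)
  have hG : Integrable G := (integrable_finsetSum _ fun j _ => hI j).const_mul _
  have hG_nonneg : 0 ≤ G := fun x => mul_nonneg (by positivity)
    (Finset.sum_nonneg fun j _ => indicator_nonneg (fun _ _ => sq_nonneg _) x)
  have hle_G : ∀ x ∈ {x | x ∈ Ioo α (α + N * δx) ∧ x + η ∈ Ioo α (α + N * δx)},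
      (gridStep α δx v (x + η) - gridStep α δx v x) ^ 2 ≤ G x := fun x hx => by
    simp only [G, I]
    rw [← sum_Ico_floor_eq_sum_indicator hδx hx.1.1 hx.2.2 hη]
    exact gridStep_translate_sub_sq_le hδx hx.1.1.le hη v
  have hG_integral :
      ∫ x, G x = (η / δx + 1) * ∑ j ∈ Finset.Icc 1 (N - 1), η * (v (j + 1) - v j) ^ 2 := by
    rw [integral_const_mul, integral_finsetSum _ fun j _ => hI j]
    congr 1
    refine Finset.sum_congr rfl fun j _ => ?_
    rw [integral_indicator_const _ measurableSet_Ico, Real.volume_real_Ico, smul_eq_mul,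
      sub_sub_cancel, max_eq_left hη]
  calc _ ≤ ∫ x in {x | x ∈ Ioo α (α + N * δx) ∧ x + η ∈ Ioo α (α + N * δx)}, G x :=
        integral_mono_of_nonneg (ae_of_all _ fun _ => sq_nonneg _) hG.integrableOn
          (ae_restrict_of_forall_mem (measurableSet_translate_inter measurableSet_Ioo η) hle_G)
    _ ≤ ∫ x, G x := setIntegral_le_integral hG (ae_of_all _ hG_nonneg)
    _ = _ := by
      rw [hG_integral, Finset.mul_sum, Finset.sum_mul, Finset.sum_mul]
      refine Finset.sum_congr rfl fun j _ => ?_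
      field_simp

lemma integral_gridStep_translate_sub_sq_le (hδx : 0 < δx) (N : ℕ) (v : ℕ → ℝ) (η : ℝ) :
    ∫ x in {x | x ∈ Ioo α (α + N * δx) ∧ x + η ∈ Ioo α (α + N * δx)},
        (gridStep α δx v (x + η) - gridStep α δx v x) ^ 2
      ≤ (∑ j ∈ Finset.Icc 1 (N - 1), δx * ((v (j + 1) - v j) / δx) ^ 2) * |η| * (|η| + δx) := by
  rcases le_total 0 η with hη | hη
  · rw [abs_of_nonneg hη]
    exact integral_gridStep_translate_sub_sq_le_of_nonneg hδx hη N v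
  · rw [setIntegral_translate_sub_sq_neg, abs_of_nonpos hη]
    exact integral_gridStep_translate_sub_sq_le_of_nonneg hδx (neg_nonneg.2 hη) N v

end Grid

lemma intervalIntegral_eq_sum_of_eqOn_Ioc {F : ℝ → ℝ} {c : ℕ → ℝ} {δt : ℝ} (hδt : 0 ≤ δt)
    {M : ℕ} (hF : ∀ n < M, EqOn F (fun _ => c n) (Ioc (n * δt) ((n + 1) * δt))) :
    ∫ t in (0 : ℝ)..M * δt, F t = ∑ n ∈ Finset.range M, δt * c n := by
  have hcell : ∀ n < M, ∫ t in Ioc (n * δt) ((n + 1) * δt), F t = δt * c n := fun n hn => by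
    rw [setIntegral_congr_fun measurableSet_Ioc (hF n hn), setIntegral_const,
      Real.volume_real_Ioc, smul_eq_mul, ← sub_mul, add_sub_cancel_left, one_mul,
      max_eq_left hδt]
  have hint : ∀ n < M, IntervalIntegrable F volume (n * δt) ((n + 1 : ℕ) * δt) := fun n hn => by
    rw [intervalIntegrable_iff_integrableOn_Ioc_of_le (by gcongr; omega), Nat.cast_succ]
    exact (integrableOn_const measure_Ioc_lt_top.ne).congr_fun (hF n hn).symm measurableSet_Ioc
  rw [← Finset.sum_congr rfl fun n hn => hcell n (Finset.mem_range.1 hn)]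
  have hsum := intervalIntegral.sum_integral_adjacent_intervals hint
  rw [Nat.cast_zero, zero_mul] at hsum
  rw [← hsum]
  refine Finset.sum_congr rfl fun n _ => ?_
  rw [intervalIntegral.integral_of_le (by gcongr; omega), Nat.cast_succ]

section Slab

variable {α δx δt : ℝ} {N M : ℕ} {z : ℝ → ℝ → ℝ} {val : ℕ → ℕ → ℝ}

lemma eq_gridStep_of_notMem_range (hδx : 0 < δx)
    (hz : ∀ j : ℕ, 1 ≤ j → j ≤ N → ∀ n : ℕ, n < M →
      ∀ x ∈ Ioo (α + ((j : ℝ) - 1) * δx) (α + (j : ℝ) * δx),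
      ∀ t ∈ Ioc ((n : ℝ) * δt) (((n : ℝ) + 1) * δt),
      z x t = val j (n + 1))
    {n : ℕ} (hn : n < M) {t : ℝ} (ht : t ∈ Ioc ((n : ℝ) * δt) (((n : ℝ) + 1) * δt))
    {x : ℝ} (hx : x ∈ Ioo α (α + N * δx)) (hgrid : x ∉ range fun j : ℕ => α + j * δx) :
    z x t = gridStep α δx (fun j => val j (n + 1)) x := by
  set k := ⌊(x - α) / δx⌋₊
  have hkx : α + k * δx ≤ x := (le_floor_iff_gridPoint_le hδx hx.1.le k).1 le_rfl
  have hxk : x < α + (k + 1 : ℕ) * δx := (floor_lt_iff_lt_gridPoint hδx hx.1.le _).1 k.lt_succ_self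
  have hkN : k < N := (floor_lt_iff_lt_gridPoint hδx hx.1.le N).2 hx.2
  refine hz (k + 1) le_add_self hkN n hn x ⟨?_, ?_⟩ t ht
  · rw [Nat.cast_succ, add_sub_cancel_right]
    exact lt_of_le_of_ne hkx fun h => hgrid ⟨k, h⟩
  · exact hxk

lemma setIntegral_translate_sub_sq_eq_gridStep (hδx : 0 < δx)
    (hz : ∀ j : ℕ, 1 ≤ j → j ≤ N → ∀ n : ℕ, n < M →
      ∀ x ∈ Ioo (α + ((j : ℝ) - 1) * δx) (α + (j : ℝ) * δx),
      ∀ t ∈ Ioc ((n : ℝ) * δt) (((n : ℝ) + 1) * δt),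
      z x t = val j (n + 1))
    {n : ℕ} (hn : n < M) {t : ℝ} (ht : t ∈ Ioc ((n : ℝ) * δt) (((n : ℝ) + 1) * δt)) (η : ℝ) :
    ∫ x in {x | x ∈ Ioo α (α + N * δx) ∧ x + η ∈ Ioo α (α + N * δx)}, (z (x + η) t - z x t) ^ 2 =
      ∫ x in {x | x ∈ Ioo α (α + N * δx) ∧ x + η ∈ Ioo α (α + N * δx)},
        (gridStep α δx (fun j => val j (n + 1)) (x + η) -
          gridStep α δx (fun j => val j (n + 1)) x) ^ 2 := by
  have hnull : volume (range fun j : ℕ => α + j * δx) = 0 := (countable_range _).measure_zero _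
  have hx : ∀ᵐ x, x ∉ range fun j : ℕ => α + j * δx := measure_eq_zero_iff_ae_notMem.1 hnull
  have hxη : ∀ᵐ x, x + η ∉ range fun j : ℕ => α + j * δx :=
    measure_eq_zero_iff_ae_notMem.1 ((measure_preimage_add_right _ _ _).trans hnull)
  refine setIntegral_congr_ae (measurableSet_translate_inter measurableSet_Ioo η) ?_
  filter_upwards [hx, hxη] with x hx hxη hxΩ
  rw [eq_gridStep_of_notMem_range hδx hz hn ht hxΩ.1 hx,
    eq_gridStep_of_notMem_range hδx hz hn ht hxΩ.2 hxη]

end Slab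

/-- Space translate estimate for a piecewise constant function on a space-time grid:
`∫₀^T ∫_{Ω_η} (z(x+η,t) - z(x,t))² dx dt ≤ |z|²_{1,D} · |η| · (|η| + 2δx)`. -/
theorem stmt16
    (α β T : ℝ) (hαβ : α < β) (hT : 0 < T)
    (N M : ℕ) (hN : 0 < N) (hM : 0 < M)
    (δx δt : ℝ) (hδx : δx = (β - α) / (N : ℝ)) (hδt : δt = T / (M : ℝ))
    (z : ℝ → ℝ → ℝ) (val : ℕ → ℕ → ℝ)
    (hz : ∀ j : ℕ, 1 ≤ j → j ≤ N → ∀ n : ℕ, n < M →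
      ∀ x ∈ Ioo (α + ((j : ℝ) - 1) * δx) (α + (j : ℝ) * δx),
      ∀ t ∈ Ioc ((n : ℝ) * δt) (((n : ℝ) + 1) * δt),
      z x t = val j (n + 1))
    (η : ℝ) :
    (∫ t in Ioo (0:ℝ) T, ∫ x in {x : ℝ | x ∈ Ioo α β ∧ x + η ∈ Ioo α β},
        (z (x + η) t - z x t) ^ 2)
      ≤ (∑ n ∈ Finset.range M, δt * ∑ j ∈ Finset.Icc 1 (N - 1),
            δx * ((val (j + 1) (n + 1) - val j (n + 1)) / δx) ^ 2)
          * |η| * (|η| + 2 * δx) := by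
  have hδx0 : 0 < δx := hδx ▸ div_pos (sub_pos.2 hαβ) (Nat.cast_pos.2 hN)
  have hδt0 : 0 < δt := hδt ▸ div_pos hT (Nat.cast_pos.2 hM)
  obtain rfl : β = α + N * δx := by rw [hδx]; field_simp; ring
  obtain rfl : T = M * δt := by rw [hδt]; field_simp
  rw [← integral_Ioc_eq_integral_Ioo, ← intervalIntegral.integral_of_le hT.le,
    intervalIntegral_eq_sum_of_eqOn_Ioc hδt0.le
      fun n hn t ht => setIntegral_translate_sub_sq_eq_gridStep hδx0 hz hn ht η,
    Finset.sum_mul, Finset.sum_mul]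
  refine Finset.sum_le_sum fun n _ => ?_
  set S := ∑ j ∈ Finset.Icc 1 (N - 1), δx * ((val (j + 1) (n + 1) - val j (n + 1)) / δx) ^ 2
  have hS : 0 ≤ S := Finset.sum_nonneg fun j _ => by positivity
  calc _ ≤ δt * (S * |η| * (|η| + δx)) := by
        gcongr
        exact integral_gridStep_translate_sub_sq_le hδx0 N _ η
    _ ≤ δt * (S * |η| * (|η| + 2 * δx)) := by gcongr; linarith
    _ = δt * S * |η| * (|η| + 2 * δx) := by ring
end
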